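/- Let ℱ be the set of (undecorated) planar rooted forests and B⁺ the grafting operator. Then (kℱ, m, 1, Δ, ε, B⁺) is a cocycle bialgebra and is the initial object in the category of cocycle bialgebras: for every bialgebra (H, m_H, 1_H, Δ_H, ε_H) equipped with a linear operator P : H → H satisfying Δ_H ∘ P = (P ⊗ id) ∘ Δ_H + (id ⊗ P) ∘ Δ_H, there exists a unique algebra homomorphism φ : kℱ → H which is a bialgebra morphism and satisfies φ ∘ B⁺ = P ∘ φ. -/

import Mathlib

open scoped TensorProduct

universe u v w u'

/-- Decorated planar rooted trees: internal vertices are decorated by `Ω`,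
leaves are decorated by `X ⊔ Ω` (a leaf decorated by `ω : Ω` is `node ω []`). -/
inductive PTree (X : Type u) (Ω : Type v) : Type (max u v)
  | leafX : X → PTree X Ω
  | node : Ω → List (PTree X Ω) → PTree X Ω

namespace Moerdijk

variable {X : Type u} {Ω : Type v}

/-- `ℱ(X,Ω)`: decorated planar rooted forests, i.e. the free monoid on decorated
planar rooted trees under concatenation. -/
abbrev RForest (X : Type u) (Ω : Type v) := FreeMonoid (PTree X Ω)

/-- The single-vertex forest `•ₓ` for `x ∈ X`. -/
def leafF (x : X) : RForest X Ω := FreeMonoid.of (PTree.leafX x)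

/-- Grafting of a forest onto a new common root decorated by `ω`. -/
def graft (ω : Ω) (F : RForest X Ω) : RForest X Ω :=
  FreeMonoid.of (PTree.node ω (FreeMonoid.toList F))

variable (k : Type w) [CommRing k]

/-- `H(X,Ω)`: the free `k`-module on decorated planar rooted forests, a unital
associative algebra under the concatenation product. -/
abbrev RAlg (X : Type u) (Ω : Type v) := MonoidAlgebra k (RForest X Ω)

/-- The basis element of `H(X,Ω)` corresponding to a forest `F`. -/
noncomputable def ofF (F : RForest X Ω) : RAlg k X Ω := MonoidAlgebra.of k (RForest X Ω) F

/-- The grafting operator `B⁺_ω : H(X,Ω) → H(X,Ω)` as a linear map. -/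
noncomputable def Bplus (ω : Ω) : RAlg k X Ω →ₗ[k] RAlg k X Ω :=
  MonoidAlgebra.mapDomainLinearMap k k (graft ω)

/-- The value of the coproduct `Δ_λ` on a decorated planar rooted tree:
`Δ_λ(•ₓ) = •ₓ ⊗ 1 + 1 ⊗ •ₓ + λ •ₓ ⊗ •ₓ` and
`Δ_λ(B⁺_ω(F)) = (B⁺_ω ⊗ id)Δ_λ(F) + (id ⊗ B⁺_ω)Δ_λ(F)`. -/
noncomputable def DeltaT (lam : k) : PTree X Ω → (RAlg k X Ω ⊗[k] RAlg k X Ω)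
  | .leafX x =>
      ofF k (leafF x) ⊗ₜ[k] 1 + 1 ⊗ₜ[k] ofF k (leafF x)
        + lam • (ofF k (leafF x) ⊗ₜ[k] ofF k (leafF x))
  | .node ω ts =>
      ((TensorProduct.map (Bplus k ω) LinearMap.id
        + TensorProduct.map LinearMap.id (Bplus k ω) :
          (RAlg k X Ω ⊗[k] RAlg k X Ω) →ₗ[k] (RAlg k X Ω ⊗[k] RAlg k X Ω)))
        ((ts.attach.map fun t => DeltaT lam t.1).prod)
decreasing_by
  have := List.sizeOf_lt_of_mem t.2
  simp only [PTree.node.sizeOf_spec]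
  omega

/-- The value of the coproduct `Δ_λ` on a forest: `Δ_λ(T₁⋯Tₘ) = Δ_λ(T₁)⋯Δ_λ(Tₘ)`. -/
noncomputable def DeltaF (lam : k) (F : RForest X Ω) : RAlg k X Ω ⊗[k] RAlg k X Ω :=
  ((FreeMonoid.toList F).map (DeltaT k lam)).prod

/-- The coproduct `Δ_λ : H(X,Ω) → H(X,Ω) ⊗ H(X,Ω)`. -/
noncomputable def Delta (lam : k) : RAlg k X Ω →ₗ[k] (RAlg k X Ω ⊗[k] RAlg k X Ω) :=
  (Finsupp.lsum k fun F => LinearMap.toSpanSingleton k _ (DeltaF k lam F)) ∘ₗ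
    (MonoidAlgebra.coeffLinearEquiv k).toLinearMap

/-- The counit `ε : H(X,Ω) → k`, sending the empty forest to `1` and every
nonempty forest to `0`. -/
noncomputable def eps : RAlg k X Ω →ₗ[k] k :=
  (Finsupp.lsum k fun F => LinearMap.toSpanSingleton k k
    (if (FreeMonoid.toList F).isEmpty then (1 : k) else 0)) ∘ₗ
    (MonoidAlgebra.coeffLinearEquiv k).toLinearMap

end Moerdijk

/-!
Forests form the free algebra with one operator `B⁺` (on no generators): an algebra map out of
`kℱ` is determined by its values on trees, and every tree is `B⁺` of the forest of its subtrees.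
So two algebra maps `kℱ → A` that intertwine `B⁺` with the same linear operator `Q` on `A`
coincide, and for every `Q` there is one. Each identity of the theorem compares two algebra
maps out of `kℱ`, and holds because both sides intertwine `B⁺` with a common operator:
`B⁺ ⊗ 1 ⊗ 1 + 1 ⊗ B⁺ ⊗ 1 + 1 ⊗ 1 ⊗ B⁺` for coassociativity (by the cocycle property of `B⁺`),
`B⁺` itself for the counit laws (as `ε ∘ B⁺ = 0`), `P ⊗ 1 + 1 ⊗ P` for `Δ_H ∘ φ = (φ ⊗ φ) ∘ Δ`,
and `0` for `ε_H ∘ φ = ε` (a 1-cocycle `P` of a coalgebra satisfies `ε_H ∘ P = 0`).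
-/

@[elab_as_elim]
theorem PTree.ind {X : Type u} {Ω : Type v} {motive : PTree X Ω → Prop}
    (leafX : ∀ x, motive (.leafX x))
    (node : ∀ ω ts, (∀ t ∈ ts, motive t) → motive (.node ω ts)) (t : PTree X Ω) : motive t :=
  PTree.rec (motive_2 := fun ts => ∀ t ∈ ts, motive t) leafX node
    (by simp) (fun t ts ht hts => by simpa [ht] using hts) t

namespace Moerdijk

section Cocycle

open TensorProduct LinearMap

variable {k : Type w} [CommRing k] {V W : Type*} [AddCommMonoid V] [Module k V]
  [AddCommMonoid W] [Module k W]

noncomputable def kroneckerSum (B : V →ₗ[k] V) (C : W →ₗ[k] W) : V ⊗[k] W →ₗ[k] V ⊗[k] W :=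
  map B id + map id C

def IsOneCocycle (Δ : V →ₗ[k] V ⊗[k] V) (B : V →ₗ[k] V) : Prop :=
  ∀ y, Δ (B y) = kroneckerSum B B (Δ y)

@[simp]
theorem kroneckerSum_tmul (B : V →ₗ[k] V) (C : W →ₗ[k] W) (a : V) (b : W) :
    kroneckerSum B C (a ⊗ₜ b) = B a ⊗ₜ b + a ⊗ₜ C b := rfl

theorem map_kroneckerSum {φ : V →ₗ[k] W} {B : V →ₗ[k] V} {P : W →ₗ[k] W}
    (h : ∀ y, φ (B y) = P (φ y)) (z : V ⊗[k] V) :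
    map φ φ (kroneckerSum B B z) = kroneckerSum P P (map φ φ z) := by
  induction z using TensorProduct.induction_on with
  | zero => simp
  | tmul a b => simp [h]
  | add z w hz hw => simp only [map_add, hz, hw]

theorem lid_map_counit_kroneckerSum {ε : V →ₗ[k] k} {B : V →ₗ[k] V} (h : ∀ y, ε (B y) = 0)
    (z : V ⊗[k] V) :
    TensorProduct.lid k V (map ε id (kroneckerSum B B z))
      = B (TensorProduct.lid k V (map ε id z)) := by
  induction z using TensorProduct.induction_on with
  | zero => simp
  | tmul a b => simp [h]
  | add z w hz hw => simp only [map_add, hz, hw]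

theorem rid_map_counit_kroneckerSum {ε : V →ₗ[k] k} {B : V →ₗ[k] V} (h : ∀ y, ε (B y) = 0)
    (z : V ⊗[k] V) :
    TensorProduct.rid k V (map id ε (kroneckerSum B B z))
      = B (TensorProduct.rid k V (map id ε z)) := by
  induction z using TensorProduct.induction_on with
  | zero => simp
  | tmul a b => simp [h]
  | add z w hz hw => simp only [map_add, hz, hw]

namespace IsOneCocycle

variable {Δ : V →ₗ[k] V ⊗[k] V} {B : V →ₗ[k] V}

theorem map_id_comul (hB : IsOneCocycle Δ B) (y : V) :
    map id Δ (Δ (B y)) = kroneckerSum B (kroneckerSum B B) (map id Δ (Δ y)) := by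
  rw [hB]
  induction Δ y using TensorProduct.induction_on with
  | zero => simp
  | tmul a b => simp [hB b]
  | add z w hz hw => simp only [map_add, hz, hw]

theorem assoc_map_comul_id (hB : IsOneCocycle Δ B) (y : V) :
    TensorProduct.assoc k V V V (map Δ id (Δ (B y)))
      = kroneckerSum B (kroneckerSum B B) (TensorProduct.assoc k V V V (map Δ id (Δ y))) := by
  have key (w : V ⊗[k] V) (b : V) :
      TensorProduct.assoc k V V V (kroneckerSum B B w ⊗ₜ b + w ⊗ₜ B b)
        = kroneckerSum B (kroneckerSum B B) (TensorProduct.assoc k V V V (w ⊗ₜ b)) := by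
    induction w using TensorProduct.induction_on with
    | zero => simp
    | tmul c d => simp [add_tmul, tmul_add]; abel
    | add z w hz hw => simp only [map_add, add_tmul] at hz hw ⊢; rw [← hz, ← hw]; abel
  rw [hB]
  induction Δ y using TensorProduct.induction_on with
  | zero => simp
  | tmul a b => simpa [hB a] using key (Δ a) b
  | add z w hz hw => simp only [map_add, hz, hw]

theorem counit_apply_eq_zero {C : Type*} [AddCommMonoid C] [Module k C] [Coalgebra k C]
    {P : C →ₗ[k] C} (hP : IsOneCocycle Coalgebra.comul P) (y : C) :
    Coalgebra.counit (R := k) (P y) = 0 := by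
  -- Apply `ε ⊗ ε`: by the counit laws each of the three terms becomes `ε (P y)`.
  let e : C ⊗[k] C →ₗ[k] k :=
    (TensorProduct.lid k k).toLinearMap ∘ₗ map Coalgebra.counit Coalgebra.counit
  have hleft (f : C →ₗ[k] C) (x : C) :
      e (map f id (Coalgebra.comul x)) = Coalgebra.counit (f x) := by
    have : e ∘ₗ map f id = (TensorProduct.lid k k).toLinearMap ∘ₗ
        map (Coalgebra.counit ∘ₗ f) id ∘ₗ Coalgebra.counit.lTensor C := by
      simp only [e, LinearMap.comp_assoc, LinearMap.lTensor_def, ← TensorProduct.map_comp]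
      simp
    rw [← LinearMap.comp_apply (f := e), this, LinearMap.comp_apply, LinearMap.comp_apply,
      Coalgebra.lTensor_counit_comul]
    simp
  have hright (f : C →ₗ[k] C) (x : C) :
      e (map id f (Coalgebra.comul x)) = Coalgebra.counit (f x) := by
    have : e ∘ₗ map id f = (TensorProduct.lid k k).toLinearMap ∘ₗ
        map id (Coalgebra.counit ∘ₗ f) ∘ₗ Coalgebra.counit.rTensor C := by
      simp only [e, LinearMap.comp_assoc, LinearMap.rTensor_def, ← TensorProduct.map_comp]
      simp
    rw [← LinearMap.comp_apply (f := e), this, LinearMap.comp_apply, LinearMap.comp_apply,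
      Coalgebra.rTensor_counit_comul]
    simp
  have hcomul : e (Coalgebra.comul (P y)) = Coalgebra.counit (P y) := by
    simpa using hleft LinearMap.id (P y)
  have := congr(e $(hP y))
  rw [kroneckerSum, LinearMap.add_apply, map_add, hcomul, hleft, hright] at this
  exact left_eq_add.mp this

end IsOneCocycle

end Cocycle

variable {X : Type u} {Ω : Type v} (k : Type w) [CommRing k]

section Basic

theorem ofF_mul (F G : RForest X Ω) : ofF k (F * G) = ofF k F * ofF k G :=
  map_mul (MonoidAlgebra.of k _) F G

theorem graft_eq_of (ω : Ω) (F : RForest X Ω) :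
    graft ω F = FreeMonoid.of (.node ω F.toList) := rfl

@[simp]
theorem Bplus_single (ω : Ω) (F : RForest X Ω) (b : k) :
    Bplus k ω (MonoidAlgebra.single F b) = MonoidAlgebra.single (graft ω F) b := by
  simp [Bplus]

end Basic

section UniversalProperty

variable {A : Type*} [Semiring A] [Algebra k A]

noncomputable def treeLift (a : X → A) (Q : Ω → A →ₗ[k] A) : PTree X Ω → A
  | .leafX x => a x
  | .node ω ts => Q ω (ts.map (treeLift a Q)).prod

noncomputable def lift (a : X → A) (Q : Ω → A →ₗ[k] A) : RAlg k X Ω →ₐ[k] A :=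
  MonoidAlgebra.lift k A (RForest X Ω) (FreeMonoid.lift (treeLift k a Q))

variable {k}

theorem lift_single (a : X → A) (Q : Ω → A →ₗ[k] A) (F : RForest X Ω) (b : k) :
    lift k a Q (MonoidAlgebra.single F b) = b • (F.toList.map (treeLift k a Q)).prod := by
  rw [lift, MonoidAlgebra.lift_single, FreeMonoid.lift_apply]

theorem lift_Bplus (a : X → A) (Q : Ω → A →ₗ[k] A) (ω : Ω) (y : RAlg k X Ω) :
    lift k a Q (Bplus k ω y) = Q ω (lift k a Q y) := by
  induction y using MonoidAlgebra.induction_linear with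
  | zero => simp
  | add y z hy hz => simp only [map_add, hy, hz]
  | single F b => simp [lift_single, graft_eq_of, treeLift]

theorem map_ofF_ofList (f : RAlg k X Ω →ₐ[k] A) (ts : List (PTree X Ω)) :
    f (ofF k (.ofList ts)) = (ts.map fun t => f (ofF k (.of t))).prod := by
  induction ts with
  | nil => exact map_one f
  | cons t ts ih =>
    rw [FreeMonoid.ofList_cons, ofF_mul, map_mul, ih, List.map_cons, List.prod_cons]

theorem algHom_ext_of_comp_Bplus {f g : RAlg k X Ω →ₐ[k] A} (Q : Ω → A →ₗ[k] A)
    (hleaf : ∀ x, f (ofF k (leafF x)) = g (ofF k (leafF x)))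
    (hf : ∀ ω y, f (Bplus k ω y) = Q ω (f y)) (hg : ∀ ω y, g (Bplus k ω y) = Q ω (g y)) :
    f = g := by
  have htree (t : PTree X Ω) : f (ofF k (.of t)) = g (ofF k (.of t)) := by
    induction t using PTree.ind with
    | leafX x => exact hleaf x
    | node ω ts ih =>
      have hnode : ofF k (.of (.node ω ts)) = Bplus k ω (ofF k (.ofList ts)) := by
        simp [ofF, graft_eq_of]
      rw [hnode, hf, hg, map_ofF_ofList, map_ofF_ofList, List.map_congr_left ih]
  exact MonoidAlgebra.algHom_ext' (FreeMonoid.hom_eq htree) (Subsingleton.elim _ _)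

end UniversalProperty


section Coproduct

variable (lam : k)

@[simp]
theorem Delta_single (F : RForest X Ω) (b : k) :
    Delta k lam (MonoidAlgebra.single F b) = b • DeltaF k lam F := by
  simp [Delta]

@[simp]
theorem eps_single (F : RForest X Ω) (b : k) :
    eps k (MonoidAlgebra.single F b) = if F.toList.isEmpty then b else 0 := by
  simp [eps]

theorem DeltaF_graft (ω : Ω) (F : RForest X Ω) :
    DeltaF k lam (graft ω F)
      = TensorProduct.map (Bplus k ω) LinearMap.id (DeltaF k lam F)
        + TensorProduct.map LinearMap.id (Bplus k ω) (DeltaF k lam F) := by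
  simp [graft_eq_of, DeltaF, DeltaT]

noncomputable def DeltaAlgHom : RAlg k X Ω →ₐ[k] RAlg k X Ω ⊗[k] RAlg k X Ω :=
  MonoidAlgebra.lift k _ (RForest X Ω)
    { toFun := DeltaF k lam
      map_one' := by simp [DeltaF]
      map_mul' := by simp [DeltaF] }

@[simp]
theorem DeltaAlgHom_toLinearMap :
    (DeltaAlgHom k lam : RAlg k X Ω →ₐ[k] _).toLinearMap = Delta k lam := by
  refine LinearMap.ext fun y => ?_
  induction y using MonoidAlgebra.induction_linear with
  | zero => simp
  | add y z hy hz => simp only [map_add, hy, hz]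
  | single F b => rw [Delta_single]; exact MonoidAlgebra.lift_single _ _ _

@[simp]
theorem DeltaAlgHom_apply (y : RAlg k X Ω) : DeltaAlgHom k lam y = Delta k lam y :=
  LinearMap.congr_fun (DeltaAlgHom_toLinearMap k lam) y

noncomputable def epsAlgHom : RAlg k X Ω →ₐ[k] k :=
  MonoidAlgebra.lift k k (RForest X Ω)
    { toFun := fun F => if F.toList.isEmpty then 1 else 0
      map_one' := by simp
      map_mul' := fun F G => by
        by_cases hF : F.toList = [] <;> by_cases hG : G.toList = [] <;> simp [hF, hG] }

@[simp]
theorem epsAlgHom_toLinearMap : (epsAlgHom k : RAlg k X Ω →ₐ[k] k).toLinearMap = eps k := by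
  refine LinearMap.ext fun y => ?_
  induction y using MonoidAlgebra.induction_linear with
  | zero => simp
  | add y z hy hz => simp only [map_add, hy, hz]
  | single F b => simp [epsAlgHom, MonoidAlgebra.lift_single]

@[simp]
theorem epsAlgHom_apply (y : RAlg k X Ω) : epsAlgHom k y = eps k y :=
  LinearMap.congr_fun (epsAlgHom_toLinearMap k) y

theorem Delta_mul (x y : RAlg k X Ω) : Delta k lam (x * y) = Delta k lam x * Delta k lam y := by
  simpa using map_mul (DeltaAlgHom k lam) x y

theorem Delta_one : Delta k lam (1 : RAlg k X Ω) = 1 := by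
  simpa using map_one (DeltaAlgHom k lam (X := X) (Ω := Ω))

theorem eps_mul (x y : RAlg k X Ω) : eps k (x * y) = eps k x * eps k y := by
  simpa using map_mul (epsAlgHom k) x y

theorem eps_one : eps k (1 : RAlg k X Ω) = 1 := by
  simpa using map_one (epsAlgHom k (X := X) (Ω := Ω))

theorem isOneCocycle_Delta_Bplus (ω : Ω) :
    IsOneCocycle (Delta k lam : RAlg k X Ω →ₗ[k] _) (Bplus k ω) := by
  intro y
  induction y using MonoidAlgebra.induction_linear with
  | zero => simp
  | add y z hy hz => simp only [map_add, hy, hz]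
  | single F b => simp [DeltaF_graft, kroneckerSum]

theorem eps_Bplus (ω : Ω) (y : RAlg k X Ω) : eps k (Bplus k ω y) = 0 := by
  induction y using MonoidAlgebra.induction_linear with
  | zero => simp
  | add y z hy hz => simp only [map_add, hy, hz, add_zero]
  | single F b => simp [graft_eq_of]

end Coproduct

section CocycleBialgebra

open TensorProduct

variable [IsEmpty X] (lam : k)

theorem Delta_coassoc :
    (TensorProduct.assoc k (RAlg k X Ω) (RAlg k X Ω) (RAlg k X Ω)).toLinearMap ∘ₗ
        map (Delta k lam) LinearMap.id ∘ₗ Delta k lam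
      = map LinearMap.id (Delta k lam) ∘ₗ Delta k lam := by
  set Δ : RAlg k X Ω →ₐ[k] _ := DeltaAlgHom k lam
  let L := (Algebra.TensorProduct.assoc k k k _ _ _).toAlgHom.comp
    ((Algebra.TensorProduct.map Δ (AlgHom.id k _)).comp Δ)
  let R := (Algebra.TensorProduct.map (AlgHom.id k _) Δ).comp Δ
  have hL : L.toLinearMap
      = (TensorProduct.assoc k (RAlg k X Ω) (RAlg k X Ω) (RAlg k X Ω)).toLinearMap ∘ₗ
        map (Delta k lam) LinearMap.id ∘ₗ Delta k lam := by
    simp [L, Δ, AlgebraTensorModule.map_eq, AlgebraTensorModule.assoc_eq]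
  have hR : R.toLinearMap = map LinearMap.id (Delta k lam) ∘ₗ Delta k lam := by
    simp [R, Δ, AlgebraTensorModule.map_eq]
  rw [← hL, ← hR]
  congr 1
  refine algHom_ext_of_comp_Bplus
    (fun ω => kroneckerSum (Bplus k ω) (kroneckerSum (Bplus k ω) (Bplus k ω))) isEmptyElim
    (fun ω y => ?_) (fun ω y => ?_)
  · simp only [← AlgHom.toLinearMap_apply, hL, LinearMap.comp_apply]
    exact (isOneCocycle_Delta_Bplus k lam ω).assoc_map_comul_id y
  · simp only [← AlgHom.toLinearMap_apply, hR, LinearMap.comp_apply]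
    exact (isOneCocycle_Delta_Bplus k lam ω).map_id_comul y

theorem lid_map_eps_Delta :
    (TensorProduct.lid k (RAlg k X Ω)).toLinearMap ∘ₗ map (eps k) LinearMap.id ∘ₗ Delta k lam
      = LinearMap.id := by
  let L := (Algebra.TensorProduct.lid k (RAlg k X Ω)).toAlgHom.comp
    ((Algebra.TensorProduct.map (epsAlgHom k) (AlgHom.id k _)).comp (DeltaAlgHom k lam))
  have hL : L.toLinearMap = (TensorProduct.lid k (RAlg k X Ω)).toLinearMap ∘ₗ
      map (eps k) LinearMap.id ∘ₗ Delta k lam := by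
    simp [L, AlgebraTensorModule.map_eq]
  rw [← hL, ← AlgHom.toLinearMap_id]
  congr 1
  refine algHom_ext_of_comp_Bplus (Bplus k) isEmptyElim (fun ω y => ?_) (fun _ _ => rfl)
  simp only [← AlgHom.toLinearMap_apply, hL, LinearMap.comp_apply]
  rw [isOneCocycle_Delta_Bplus]
  exact lid_map_counit_kroneckerSum (eps_Bplus k ω) _

theorem rid_map_eps_Delta :
    (TensorProduct.rid k (RAlg k X Ω)).toLinearMap ∘ₗ map LinearMap.id (eps k) ∘ₗ Delta k lam
      = LinearMap.id := by
  let R := (Algebra.TensorProduct.rid k k (RAlg k X Ω)).toAlgHom.comp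
    ((Algebra.TensorProduct.map (AlgHom.id k _) (epsAlgHom k)).comp (DeltaAlgHom k lam))
  have hR : R.toLinearMap = (TensorProduct.rid k (RAlg k X Ω)).toLinearMap ∘ₗ
      map LinearMap.id (eps k) ∘ₗ Delta k lam := by
    simp [R, AlgebraTensorModule.map_eq, AlgebraTensorModule.rid_eq_rid]
  rw [← hR, ← AlgHom.toLinearMap_id]
  congr 1
  refine algHom_ext_of_comp_Bplus (Bplus k) isEmptyElim (fun ω y => ?_) (fun _ _ => rfl)
  simp only [← AlgHom.toLinearMap_apply, hR, LinearMap.comp_apply]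
  rw [isOneCocycle_Delta_Bplus]
  exact rid_map_counit_kroneckerSum (eps_Bplus k ω) _

end CocycleBialgebra

section Initiality

variable [IsEmpty X] {H : Type*} [Semiring H] [Bialgebra k H] {Q : Ω → H →ₗ[k] H}

theorem comul_lift (hQ : ∀ ω, IsOneCocycle Coalgebra.comul (Q ω)) (lam : k) (y : RAlg k X Ω) :
    Coalgebra.comul (R := k) (lift k isEmptyElim Q y)
      = TensorProduct.map (lift k isEmptyElim Q).toLinearMap (lift k isEmptyElim Q).toLinearMap
          (Delta k lam y) := by
  set φ := lift k (isEmptyElim : X → H) Q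
  let R := (Algebra.TensorProduct.map φ φ).comp (DeltaAlgHom k lam)
  have hR : R.toLinearMap = TensorProduct.map φ.toLinearMap φ.toLinearMap ∘ₗ Delta k lam := by
    simp [R, TensorProduct.AlgebraTensorModule.map_eq]
  have : (Bialgebra.comulAlgHom k H).comp φ = R := by
    refine algHom_ext_of_comp_Bplus (fun ω => kroneckerSum (Q ω) (Q ω)) isEmptyElim
      (fun ω y => ?_) (fun ω y => ?_)
    · simp only [AlgHom.comp_apply, Bialgebra.comulAlgHom_apply, φ, lift_Bplus]
      exact hQ ω _
    · simp only [← AlgHom.toLinearMap_apply, hR, LinearMap.comp_apply]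
      rw [isOneCocycle_Delta_Bplus]
      exact map_kroneckerSum (lift_Bplus (isEmptyElim : X → H) Q ω) _
  exact (congr($this y)).trans (LinearMap.congr_fun hR y)

theorem counit_lift (hQ : ∀ ω, IsOneCocycle Coalgebra.comul (Q ω)) (y : RAlg k X Ω) :
    Coalgebra.counit (R := k) (lift k isEmptyElim Q y) = eps k y := by
  have : (Bialgebra.counitAlgHom k H).comp (lift k isEmptyElim Q) = epsAlgHom k (X := X) := by
    refine algHom_ext_of_comp_Bplus (fun _ => 0) isEmptyElim (fun ω y => ?_) (fun ω y => ?_)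
    · simp only [AlgHom.comp_apply, Bialgebra.counitAlgHom_apply, lift_Bplus]
      exact (hQ ω).counit_apply_eq_zero _
    · simp only [← AlgHom.toLinearMap_apply, epsAlgHom_toLinearMap]
      exact eps_Bplus k ω y
  exact (congr($this y)).trans (LinearMap.congr_fun (epsAlgHom_toLinearMap k) y)

end Initiality

/-- `(kℱ, m, 1, Δ, ε, B⁺)`, on undecorated planar rooted forests (all vertices carrying
the unique decoration), is a cocycle bialgebra and is the initial object in the category
of cocycle bialgebras. -/
theorem initial_cocycle_bialgebra_undecorated :
    -- (i) `(kℱ, m, 1, Δ, ε, B⁺)` is a cocycle bialgebra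
    (((TensorProduct.assoc k (RAlg k PEmpty.{1} PUnit.{1}) (RAlg k PEmpty.{1} PUnit.{1})
          (RAlg k PEmpty.{1} PUnit.{1})).toLinearMap ∘ₗ
        TensorProduct.map (Delta k 0) LinearMap.id ∘ₗ Delta k 0
      = TensorProduct.map LinearMap.id (Delta k 0) ∘ₗ Delta k 0) ∧
    ((TensorProduct.lid k (RAlg k PEmpty.{1} PUnit.{1})).toLinearMap ∘ₗ
        TensorProduct.map (eps k) LinearMap.id ∘ₗ Delta k 0
      = (LinearMap.id : RAlg k PEmpty.{1} PUnit.{1} →ₗ[k] RAlg k PEmpty.{1} PUnit.{1})) ∧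
    ((TensorProduct.rid k (RAlg k PEmpty.{1} PUnit.{1})).toLinearMap ∘ₗ
        TensorProduct.map LinearMap.id (eps k) ∘ₗ Delta k 0
      = (LinearMap.id : RAlg k PEmpty.{1} PUnit.{1} →ₗ[k] RAlg k PEmpty.{1} PUnit.{1})) ∧
    (∀ x y : RAlg k PEmpty.{1} PUnit.{1}, Delta k 0 (x * y) = Delta k 0 x * Delta k 0 y) ∧
    (Delta k (0 : k) (1 : RAlg k PEmpty.{1} PUnit.{1}) = 1) ∧
    (∀ x y : RAlg k PEmpty.{1} PUnit.{1}, eps k (x * y) = eps k x * eps k y) ∧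
    (eps k (1 : RAlg k PEmpty.{1} PUnit.{1}) = 1) ∧
    (∀ y : RAlg k PEmpty.{1} PUnit.{1}, Delta k 0 (Bplus k PUnit.unit y)
      = TensorProduct.map (Bplus k PUnit.unit) LinearMap.id (Delta k 0 y)
        + TensorProduct.map LinearMap.id (Bplus k PUnit.unit) (Delta k 0 y))) ∧
    -- (ii) initiality
    (∀ (H' : Type u') [Semiring H'] [Bialgebra k H'] (P : H' →ₗ[k] H'),
      (∀ y : H', Coalgebra.comul (R := k) (P y)
        = TensorProduct.map P LinearMap.id (Coalgebra.comul (R := k) y)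
          + TensorProduct.map LinearMap.id P (Coalgebra.comul (R := k) y)) →
      ∃! φ : RAlg k PEmpty.{1} PUnit.{1} →ₐ[k] H',
        (∀ y : RAlg k PEmpty.{1} PUnit.{1}, φ (Bplus k PUnit.unit y) = P (φ y)) ∧
        (∀ y : RAlg k PEmpty.{1} PUnit.{1}, Coalgebra.comul (R := k) (φ y)
          = TensorProduct.map φ.toLinearMap φ.toLinearMap (Delta k 0 y)) ∧
        (∀ y : RAlg k PEmpty.{1} PUnit.{1}, Coalgebra.counit (R := k) (φ y) = eps k y)) := by
  refine ⟨⟨Delta_coassoc k 0, lid_map_eps_Delta k 0, rid_map_eps_Delta k 0, Delta_mul k 0,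
    Delta_one k 0, eps_mul k, eps_one k, isOneCocycle_Delta_Bplus k 0 PUnit.unit⟩, ?_⟩
  intro H _ _ P hP
  refine ⟨lift k isEmptyElim fun _ => P,
    ⟨lift_Bplus _ _ _, comul_lift k (fun _ => hP) 0, counit_lift k fun _ => hP⟩, ?_⟩
  rintro ψ ⟨hψ, -, -⟩
  exact algHom_ext_of_comp_Bplus (fun _ => P) isEmptyElim (fun _ => hψ) (lift_Bplus _ _)

end Moerdijk
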